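/- Let A → R be a ring homomorphism, and suppose R is finitely generated and projective as a right A-module. Then the canonical map ζ : R° → R* from the right finite dual A-coring to the right A-linear dual of R, given on generators by ζ(class of p* ⊗ p)(r) = p*(p·r), is bijective. -/

import Mathlib

open MulOpposite

universe u

variable (A R : Type u) [Ring A] [Ring R] (φ : A →+* R)

/-- An object of the category `𝒜_R`: a right `R`-module (encoded as a module
over `Rᵐᵒᵖ`) which, via restriction of scalars along `φ`, is finitely generated
and projective as a right `A`-module. -/
structure FDObj : Type (u + 1) where
  carrier : Type u
  [acg : AddCommGroup carrier]
  [modR : Module Rᵐᵒᵖ carrier]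
  [modA : Module Aᵐᵒᵖ carrier]
  compat : ∀ (a : Aᵐᵒᵖ) (x : carrier), a • x = (RingHom.op φ a) • x
  fin : Module.Finite Aᵐᵒᵖ carrier
  proj : Module.Projective Aᵐᵒᵖ carrier

attribute [instance] FDObj.acg FDObj.modR FDObj.modA

variable {A R φ}

/-- The right `A`-linear dual of an object `P` of `𝒜_R`. -/
abbrev FDObj.dual (P : FDObj A R φ) : Type u := P.carrier →ₗ[Aᵐᵒᵖ] A

/-- Composition of a dual element with a right `R`-linear map, `q* ↦ q* ∘ t`. -/
def FDObj.compDual {P Q : FDObj A R φ} (t : P.carrier →ₗ[Rᵐᵒᵖ] Q.carrier)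
    (g : Q.dual) : P.dual where
  toFun := fun p => g (t p)
  map_add' := by intro p q; simp
  map_smul' := by
    intro a p
    simp only [RingHom.id_apply]
    rw [P.compat a p, map_smul, ← Q.compat a (t p), map_smul]

variable (A R φ)

/-- Generators of the finite dual: triples `(P, p*, p)`. -/
def FDGen : Type (u + 1) := Σ P : FDObj A R φ, P.dual × P.carrier

/-- The relations defining the finite dual coring `R°`: additivity in each tensor slot
(yielding the tensor products `P* ⊗_{T_P} P`) together with the relations
`q* ⊗ t·p − q*·t ⊗ p` for right `R`-linear maps `t : P → Q`. -/
def FDRel : Set (FreeAbelianGroup (FDGen A R φ)) :=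
  { x | (∃ (P : FDObj A R φ) (f g : P.dual) (p : P.carrier),
          x = FreeAbelianGroup.of ⟨P, (f + g, p)⟩
              - FreeAbelianGroup.of ⟨P, (f, p)⟩ - FreeAbelianGroup.of ⟨P, (g, p)⟩) ∨
        (∃ (P : FDObj A R φ) (f : P.dual) (p q : P.carrier),
          x = FreeAbelianGroup.of ⟨P, (f, p + q)⟩
              - FreeAbelianGroup.of ⟨P, (f, p)⟩ - FreeAbelianGroup.of ⟨P, (f, q)⟩) ∨
        (∃ (P Q : FDObj A R φ) (t : P.carrier →ₗ[Rᵐᵒᵖ] Q.carrier)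
            (g : Q.dual) (p : P.carrier),
          x = FreeAbelianGroup.of ⟨Q, (g, t p)⟩
              - FreeAbelianGroup.of ⟨P, (FDObj.compDual t g, p)⟩) }

/-- The right finite dual `R°` of the ring extension `φ : A → R`, as an abelian group. -/
def FinDual : Type (u + 1) :=
  FreeAbelianGroup (FDGen A R φ) ⧸ AddSubgroup.closure (FDRel A R φ)

noncomputable instance : AddCommGroup (FinDual A R φ) :=
  QuotientAddGroup.Quotient.addCommGroup _

/-- The right `A`-linear dual `R* = Hom_A(R, A)` of `R` (as a right `A`-module via `φ`),
realized as the additive subgroup of `R →+ A` of right `A`-linear maps. -/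
def RStar : AddSubgroup (R →+ A) where
  carrier := { f | ∀ (r : R) (a : A), f (r * φ a) = f r * a }
  add_mem' := by
    intro f g hf hg r a
    simp [hf r a, hg r a, add_mul]
  zero_mem' := by intro r a; simp
  neg_mem' := by
    intro f hf r a
    simp [hf r a, neg_mul]

/-- The functional `ζ(p* ⊗ p) : r ↦ p*(p·r)` attached to a generator. -/
def zetaGen (g : FDGen A R φ) : R →+ A where
  toFun := fun r => g.2.1 ((op r : Rᵐᵒᵖ) • g.2.2)
  map_zero' := by simp
  map_add' := by
    intro r s
    show g.2.1 ((op (r + s) : Rᵐᵒᵖ) • g.2.2) = _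
    rw [op_add, add_smul, map_add]

lemma zetaGen_mem (g : FDGen A R φ) : zetaGen A R φ g ∈ RStar A R φ := by
  intro r a
  have h1 : (op (r * φ a) : Rᵐᵒᵖ) = (RingHom.op φ (op a)) * op r := rfl
  have h2 : ((RingHom.op φ (op a)) * op r) • g.2.2
      = (RingHom.op φ (op a)) • ((op r : Rᵐᵒᵖ) • g.2.2) := mul_smul _ _ _
  have h3 : (RingHom.op φ (op a)) • ((op r : Rᵐᵒᵖ) • g.2.2)
      = (op a : Aᵐᵒᵖ) • ((op r : Rᵐᵒᵖ) • g.2.2) := (g.1.compat (op a) _).symm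
  show g.2.1 ((op (r * φ a) : Rᵐᵒᵖ) • g.2.2) = g.2.1 ((op r : Rᵐᵒᵖ) • g.2.2) * a
  rw [h1, h2, h3, map_smul]
  rfl

/-- `ζ` on the free abelian group on generators. -/
noncomputable def zetaHat : FreeAbelianGroup (FDGen A R φ) →+ ↥(RStar A R φ) :=
  FreeAbelianGroup.lift (fun g => ⟨zetaGen A R φ g, zetaGen_mem A R φ g⟩)

lemma FDRel_le_ker : AddSubgroup.closure (FDRel A R φ) ≤ (zetaHat A R φ).ker := by
  rw [AddSubgroup.closure_le]
  rintro x hx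
  simp only [SetLike.mem_coe, AddMonoidHom.mem_ker]
  obtain (⟨P, f, g, p, rfl⟩ | ⟨P, f, p, q, rfl⟩ | ⟨P, Q, t, g, p, rfl⟩) := hx
  · rw [map_sub, map_sub, sub_sub, sub_eq_zero]
    apply Subtype.ext; apply AddMonoidHom.ext; intro r
    erw [FreeAbelianGroup.lift_apply_of, FreeAbelianGroup.lift_apply_of, FreeAbelianGroup.lift_apply_of]
    simp only [zetaHat, FreeAbelianGroup.lift_apply_of, AddSubgroup.coe_add,
      AddMonoidHom.add_apply, zetaGen, AddMonoidHom.coe_mk, ZeroHom.coe_mk,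
      LinearMap.add_apply, Pi.add_apply]
  · rw [map_sub, map_sub, sub_sub, sub_eq_zero]
    apply Subtype.ext; apply AddMonoidHom.ext; intro r
    erw [FreeAbelianGroup.lift_apply_of, FreeAbelianGroup.lift_apply_of, FreeAbelianGroup.lift_apply_of]
    simp only [zetaHat, FreeAbelianGroup.lift_apply_of, AddSubgroup.coe_add,
      AddMonoidHom.add_apply, zetaGen, AddMonoidHom.coe_mk, ZeroHom.coe_mk,
      smul_add, map_add]
    exact map_add f _ _
  · rw [map_sub, sub_eq_zero]
    apply Subtype.ext; apply AddMonoidHom.ext; intro r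
    erw [FreeAbelianGroup.lift_apply_of, FreeAbelianGroup.lift_apply_of]
    simp only [zetaHat, FreeAbelianGroup.lift_apply_of, zetaGen, AddMonoidHom.coe_mk,
      ZeroHom.coe_mk, FDObj.compDual, LinearMap.coe_mk, AddHom.coe_mk]
    exact congrArg g (t.map_smul (MulOpposite.op r) p).symm

/-- The canonical map `ζ : R° → R*`. -/
noncomputable def zeta : FinDual A R φ →+ ↥(RStar A R φ) :=
  QuotientAddGroup.lift _ (zetaHat A R φ) (FDRel_le_ker A R φ)

/-! Every generator `p* ⊗ p` of `R°` can be moved onto the object `R` itself: for the right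
`R`-linear map `t = (p · -) : R → P` the defining relation gives `p* ⊗ t(1) = (p* ∘ t) ⊗ 1`.
Finite projectivity of `R` over `A` is exactly what makes `R` an object, so `f ↦ f ⊗ 1` is a
surjection `R* → R°`, and `ζ(f ⊗ 1)(r) = f(r)` shows that `ζ` is its inverse. -/

section

variable {A R φ}

def FDObj.mulRight (P : FDObj A R φ) (p : P.carrier) : R →ₗ[Rᵐᵒᵖ] P.carrier where
  toFun r := op r • p
  map_add' r s := by rw [op_add, add_smul]
  map_smul' s r := by
    rw [RingHom.id_apply, ← mul_smul]
    rfl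

theorem FDObj.mulRight_one (P : FDObj A R φ) (p : P.carrier) : P.mulRight p 1 = p := by
  rw [FDObj.mulRight, LinearMap.coe_mk, AddHom.coe_mk, op_one, one_smul]

/-- The class of `p* ⊗ p` in `R°`. -/
def FinDual.mk (P : FDObj A R φ) (f : P.dual) (p : P.carrier) : FinDual A R φ :=
  QuotientAddGroup.mk (FreeAbelianGroup.of (⟨P, (f, p)⟩ : FDGen A R φ))

theorem FinDual.mk_add_left (P : FDObj A R φ) (f g : P.dual) (p : P.carrier) :
    FinDual.mk P (f + g) p = FinDual.mk P f p + FinDual.mk P g p := by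
  have hrel : _ ∈ AddSubgroup.closure (FDRel A R φ) :=
    AddSubgroup.subset_closure (Or.inl ⟨P, f, g, p, rfl⟩)
  rwa [← QuotientAddGroup.eq_zero_iff, QuotientAddGroup.mk_sub, QuotientAddGroup.mk_sub,
    sub_sub, sub_eq_zero] at hrel

theorem FinDual.mk_map {P Q : FDObj A R φ} (t : P.carrier →ₗ[Rᵐᵒᵖ] Q.carrier) (g : Q.dual)
    (p : P.carrier) : FinDual.mk Q g (t p) = FinDual.mk P (FDObj.compDual t g) p := by
  have hrel : _ ∈ AddSubgroup.closure (FDRel A R φ) :=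
    AddSubgroup.subset_closure (Or.inr (Or.inr ⟨P, Q, t, g, p, rfl⟩))
  rwa [← QuotientAddGroup.eq_zero_iff, QuotientAddGroup.mk_sub, sub_eq_zero] at hrel

theorem zeta_mk_apply (P : FDObj A R φ) (f : P.dual) (p : P.carrier) (r : R) :
    (zeta A R φ (FinDual.mk P f p) : R →+ A) r = f (op r • p) := by
  change (zetaHat A R φ (FreeAbelianGroup.of (⟨P, (f, p)⟩ : FDGen A R φ)) : R →+ A) r = _
  erw [zetaHat, FreeAbelianGroup.lift_apply_of]
  rfl

variable [Module Aᵐᵒᵖ R]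

def RStar.toLinearMap (hcompat : ∀ (a : Aᵐᵒᵖ) (r : R), a • r = r * φ a.unop)
    (s : RStar A R φ) : R →ₗ[Aᵐᵒᵖ] A where
  toFun := s
  map_add' := map_add (s : R →+ A)
  map_smul' a r := by
    rw [hcompat, s.2, RingHom.id_apply, ← op_unop a, op_smul_eq_mul, unop_op]

variable (hcompat : ∀ (a : Aᵐᵒᵖ) (r : R), a • r = r * φ a.unop)
  (hfin : Module.Finite Aᵐᵒᵖ R) (hproj : Module.Projective Aᵐᵒᵖ R)

abbrev FDObj.ofRing : FDObj A R φ where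
  carrier := R
  compat a r := by rw [hcompat a r]; rfl
  fin := hfin
  proj := hproj

theorem FinDual.mk_eq_mk_ofRing (P : FDObj A R φ) (f : P.dual) (p : P.carrier) :
    FinDual.mk P f p
      = FinDual.mk (FDObj.ofRing hcompat hfin hproj) (FDObj.compDual (P.mulRight p) f) 1 := by
  have hmap := FinDual.mk_map (P := FDObj.ofRing hcompat hfin hproj) (P.mulRight p) f 1
  rwa [FDObj.mulRight_one] at hmap

noncomputable def zetaInv : RStar A R φ →+ FinDual A R φ :=
  AddMonoidHom.mk'
    (fun s => FinDual.mk (FDObj.ofRing hcompat hfin hproj) (RStar.toLinearMap hcompat s) 1)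
    fun s t => by rw [← FinDual.mk_add_left]; rfl

theorem zeta_zetaInv (s : RStar A R φ) : zeta A R φ (zetaInv hcompat hfin hproj s) = s := by
  ext r
  change (zeta A R φ (FinDual.mk _ _ _) : R →+ A) r = _
  rw [zeta_mk_apply, op_smul_eq_mul, one_mul]
  rfl

theorem zetaInv_comp_zeta :
    (zetaInv hcompat hfin hproj).comp (zeta A R φ) = AddMonoidHom.id _ := by
  refine QuotientAddGroup.addMonoidHom_ext _ (FreeAbelianGroup.lift_ext _ _ fun ⟨P, f, p⟩ => ?_)
  have hdual : RStar.toLinearMap hcompat (zeta A R φ (FinDual.mk P f p))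
      = FDObj.compDual (P := FDObj.ofRing hcompat hfin hproj) (P.mulRight p) f := by
    ext r
    exact zeta_mk_apply P f p r
  change FinDual.mk (FDObj.ofRing hcompat hfin hproj)
    (RStar.toLinearMap hcompat (zeta A R φ (FinDual.mk P f p))) 1 = FinDual.mk P f p
  rw [hdual]
  exact (FinDual.mk_eq_mk_ofRing hcompat hfin hproj P f p).symm

noncomputable def zetaEquiv : FinDual A R φ ≃+ RStar A R φ where
  toFun := zeta A R φ
  invFun := zetaInv hcompat hfin hproj
  left_inv := DFunLike.congr_fun (zetaInv_comp_zeta hcompat hfin hproj)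
  right_inv := zeta_zetaInv hcompat hfin hproj
  map_add' := map_add (zeta A R φ)

end

/-- Let `A → R` be a ring homomorphism and suppose `R` is finitely
generated and projective as a right `A`-module.  Then the canonical map
`ζ : R° → R*` from the right finite dual `A`-coring to the right `A`-linear dual of `R`,
given on generators by `ζ(p* ⊗ p)(r) = p*(p·r)`, is bijective. -/
theorem zeta_bijective_of_finite_projective
    (A R : Type u) [Ring A] [Ring R] (φ : A →+* R)
    [Module Aᵐᵒᵖ R]
    (hcompat : ∀ (a : Aᵐᵒᵖ) (r : R), a • r = r * φ a.unop)
    (hfin : Module.Finite Aᵐᵒᵖ R)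
    (hproj : Module.Projective Aᵐᵒᵖ R) :
    Function.Bijective (zeta A R φ) :=
  (zetaEquiv hcompat hfin hproj).bijective
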